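/- arXiv:1609.03943 — 9 statements merged into one kernel-verified Lean document; each statement's English description precedes it below -/
import Mathlib

section
/- Let M be a finite 2-semilattice. Define M' = {a ∈ M : a is reachable from every element of M}. Then: (i) M' is nonempty; (ii) M' is strongly connected, i.e. every element of M' is reachable from every element of M'; and (iii) for every b ∈ M there exists a ∈ M' with b·a = a (a single directed edge from b into M'). -/
/-!
Write `a → b` for `a * b = b`. Commutativity and `x * (x * y) = x * y` give `a → a * b` and
`b → a * b`, so the reachability preorder is directed, and on a finite type some vertex is
reachable from every vertex. The set of such vertices is closed under `→`; hence a walk between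
two of them never leaves the set, and every `b` has an edge `b → b * c` into it.
-/

/-- Reachability within a subset `S` via the 2-semilattice digraph `a → b ↔ a * b = b`:
a directed walk from `a` to `b` all of whose vertices lie in `S`. -/
def ReachIn {M : Type*} [Mul M] (S : Set M) (a b : M) : Prop :=
  Relation.ReflTransGen (fun x y => x ∈ S ∧ y ∈ S ∧ x * y = y) a b

open Relation

section ReachableFromAll

variable {α : Type*} {r : α → α → Prop}

def reachableFromAll (r : α → α → Prop) : Set α := {a | ∀ b, ReflTransGen r b a}

theorem reachableFromAll_nonempty [Finite α] [Nonempty α] (hr : Directed r id) :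
    (reachableFromAll r).Nonempty := by
  have := Fintype.ofFinite α
  obtain ⟨c, hc⟩ := (hr.mono fun _ _ => ReflTransGen.single).finset_le Finset.univ
  exact ⟨c, fun b => hc b (Finset.mem_univ b)⟩

theorem mem_reachableFromAll_of_rel {a b : α} (ha : a ∈ reachableFromAll r) (hab : r a b) :
    b ∈ reachableFromAll r :=
  fun c => (ha c).tail hab

theorem ReflTransGen.restrict_of_closed {S : Set α} (hS : ∀ x y, x ∈ S → r x y → y ∈ S)
    {a b : α} (ha : a ∈ S) (hab : ReflTransGen r a b) :
    ReflTransGen (fun x y => x ∈ S ∧ y ∈ S ∧ r x y) a b := by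
  suffices b ∈ S ∧ ReflTransGen (fun x y => x ∈ S ∧ y ∈ S ∧ r x y) a b from this.2
  induction hab with
  | refl => exact ⟨ha, .refl⟩
  | tail _ hxy ih =>
    have hy := hS _ _ ih.1 hxy
    exact ⟨hy, ih.2.tail ⟨ih.1, hy, hxy⟩⟩

theorem reflTransGen_within_reachableFromAll {a b : α} (ha : a ∈ reachableFromAll r)
    (hb : b ∈ reachableFromAll r) :
    ReflTransGen (fun x y => x ∈ reachableFromAll r ∧ y ∈ reachableFromAll r ∧ r x y) a b :=
  ReflTransGen.restrict_of_closed (fun _ _ => mem_reachableFromAll_of_rel) ha (hb a)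

theorem exists_rel_mem_reachableFromAll (hr : Directed r id)
    (hne : (reachableFromAll r).Nonempty) (b : α) : ∃ a ∈ reachableFromAll r, r b a := by
  obtain ⟨c, hc⟩ := hne
  obtain ⟨a, hba, hca⟩ := hr b c
  exact ⟨a, mem_reachableFromAll_of_rel hc hca, hba⟩

end ReachableFromAll

theorem directed_mul_eq_right {M : Type*} [Mul M] (hcomm : ∀ x y : M, x * y = y * x)
    (habs : ∀ x y : M, x * (x * y) = x * y) : Directed (fun x y : M => x * y = y) id :=
  fun a b => ⟨a * b, habs a b, show b * (a * b) = a * b by rw [hcomm a b, habs, hcomm]⟩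

theorem stmt0_general {M : Type*} [Mul M] [Finite M] [Nonempty M]
    (hcomm : ∀ x y : M, x * y = y * x)
    (habs : ∀ x y : M, x * (x * y) = x * y) :
    let M' : Set M := {a | ∀ b : M, Relation.ReflTransGen (fun x y => x * y = y) b a}
    M'.Nonempty ∧
      (∀ a ∈ M', ∀ b ∈ M', ReachIn M' a b) ∧
      (∀ b : M, ∃ a ∈ M', b * a = a) := by
  have hdir := directed_mul_eq_right hcomm habs
  have hne := reachableFromAll_nonempty hdir
  exact ⟨hne, fun _ ha _ hb => reflTransGen_within_reachableFromAll ha hb,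
    exists_rel_mem_reachableFromAll hdir hne⟩

theorem stmt0 {M : Type*} [Mul M] [Finite M] [Nonempty M]
    (hidem : ∀ x : M, x * x = x)
    (hcomm : ∀ x y : M, x * y = y * x)
    (habs : ∀ x y : M, x * (x * y) = x * y) :
    let M' : Set M := {a | ∀ b : M, Relation.ReflTransGen (fun x y => x * y = y) b a}
    M'.Nonempty ∧
      (∀ a ∈ M', ∀ b ∈ M', ReachIn M' a b) ∧
      (∀ b : M, ∃ a ∈ M', b * a = a) :=
  stmt0_general hcomm habs
end

section
/- Let M be a finite 2-semilattice and let M' = {a ∈ M : a is reachable from every element of M} be its smallest strongly connected component. Then M' is an absorbing subuniverse with respect to ·: for all a ∈ M' and b ∈ M, both a·b ∈ M' and b·a ∈ M'. -/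
theorem stmt1_general {M : Type*} [Mul M]
    (hcomm : ∀ x y : M, x * y = y * x)
    (habs : ∀ x y : M, x * (x * y) = x * y) :
    let M' : Set M := {a | ∀ b : M, Relation.ReflTransGen (fun x y => x * y = y) b a}
    ∀ a ∈ M', ∀ b : M, a * b ∈ M' ∧ b * a ∈ M' := by
  intro M' a ha b
  have hab : a * b ∈ M' := fun c => (ha c).tail (habs a b)
  exact ⟨hab, by rwa [hcomm b a]⟩

theorem stmt1 {M : Type*} [Mul M] [Finite M]
    (hidem : ∀ x : M, x * x = x)
    (hcomm : ∀ x y : M, x * y = y * x)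
    (habs : ∀ x y : M, x * (x * y) = x * y) :
    let M' : Set M := {a | ∀ b : M, Relation.ReflTransGen (fun x y => x * y = y) b a}
    ∀ a ∈ M', ∀ b : M, a * b ∈ M' ∧ b * a ∈ M' :=
  stmt1_general hcomm habs
end

section
/- Let t be an element of the free magma on two generators x and y in which both generators occur. Then for every 2-semilattice M and all a, b ∈ M, the evaluation of t in M under the assignment x ↦ a, y ↦ b equals a·b. -/
/-!
In a 2-semilattice the set `{a, b, a * b}` is closed under multiplication and `a * b` absorbs
each of its elements, so every term evaluates into it. By induction, a term mentioning both
generators evaluates to `a * b`: a factor mentioning both contributes the absorbing `a * b`,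
and otherwise the two factors are terms in one generator each, with values `a` and `b`.
-/

/-- The generator `a` occurs in the free-magma term `t`. -/
def Occurs {α : Type*} (a : α) : FreeMagma α → Prop
  | .of b => a = b
  | .mul x y => Occurs a x ∨ Occurs a y

class IsTwoSemilattice (M : Type*) [Mul M] : Prop where
  mul_self (x : M) : x * x = x
  mul_comm (x y : M) : x * y = y * x
  mul_mul_self_left (x y : M) : x * (x * y) = x * y

theorem occurs_mul {α : Type*} {i : α} {x y : FreeMagma α} :
    Occurs i (x * y) ↔ Occurs i x ∨ Occurs i y :=
  Iff.rfl

namespace FreeMagma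

variable {α M : Type*} [Mul M]

theorem lift_eq_of_forall_occurs {c : M} (hc : c * c = c) {f : α → M} {t : FreeMagma α}
    (h : ∀ i, Occurs i t → f i = c) : lift f t = c := by
  induction t using FreeMagma.recOnMul with
  | ih1 i => exact h i rfl
  | ih2 x y ihx ihy =>
    rw [map_mul, ihx fun i hi => h i (Or.inl hi), ihy fun i hi => h i (Or.inr hi), hc]

end FreeMagma

namespace IsTwoSemilattice

variable {M : Type*} [Mul M] [IsTwoSemilattice M]

theorem mul_mul_self_right (a b : M) : b * (a * b) = a * b := by
  rw [mul_comm a b, mul_mul_self_left]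

theorem mul_mem_triple {a b x y : M} (hx : x ∈ ({a, b, a * b} : Set M))
    (hy : y ∈ ({a, b, a * b} : Set M)) : x * y ∈ ({a, b, a * b} : Set M) := by
  have hba : b * a = a * b := mul_comm b a
  have hab_a : a * b * a = a * b := by rw [mul_comm, mul_mul_self_left]
  have hab_b : a * b * b = a * b := by rw [mul_comm, mul_mul_self_right]
  simp only [Set.mem_insert_iff, Set.mem_singleton_iff] at hx hy ⊢
  rcases hx with rfl | rfl | rfl <;> rcases hy with rfl | rfl | rfl <;>
    simp [mul_self, mul_mul_self_left, mul_mul_self_right, hba, hab_a, hab_b]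

theorem mul_mul_eq_of_mem_triple {a b x : M} (hx : x ∈ ({a, b, a * b} : Set M)) :
    x * (a * b) = a * b := by
  simp only [Set.mem_insert_iff, Set.mem_singleton_iff] at hx
  rcases hx with rfl | rfl | rfl
  exacts [mul_mul_self_left _ _, mul_mul_self_right _ _, mul_self _]

theorem lift_mem_triple (a b : M) (t : FreeMagma (Fin 2)) :
    FreeMagma.lift ![a, b] t ∈ ({a, b, a * b} : Set M) := by
  induction t using FreeMagma.recOnMul with
  | ih1 i => fin_cases i <;> simp
  | ih2 x y ihx ihy => rw [map_mul]; exact mul_mem_triple ihx ihy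

theorem lift_eq_left_of_not_occurs_one (a b : M) {t : FreeMagma (Fin 2)} (ht : ¬Occurs 1 t) :
    FreeMagma.lift ![a, b] t = a := by
  refine FreeMagma.lift_eq_of_forall_occurs (mul_self a) fun i hi => ?_
  fin_cases i
  · rfl
  · exact absurd hi ht

theorem lift_eq_right_of_not_occurs_zero (a b : M) {t : FreeMagma (Fin 2)} (ht : ¬Occurs 0 t) :
    FreeMagma.lift ![a, b] t = b := by
  refine FreeMagma.lift_eq_of_forall_occurs (mul_self b) fun i hi => ?_
  fin_cases i
  · exact absurd hi ht
  · rfl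

theorem lift_eq_mul_of_occurs (a b : M) {t : FreeMagma (Fin 2)} (h0 : Occurs 0 t)
    (h1 : Occurs 1 t) : FreeMagma.lift ![a, b] t = a * b := by
  induction t using FreeMagma.recOnMul with
  | ih1 i => exact absurd (h0.trans h1.symm) zero_ne_one
  | ih2 x y ihx ihy =>
    rw [occurs_mul] at h0 h1
    rw [map_mul]
    by_cases hx : Occurs 0 x ∧ Occurs 1 x
    · rw [ihx hx.1 hx.2, mul_comm, mul_mul_eq_of_mem_triple (lift_mem_triple a b y)]
    by_cases hy : Occurs 0 y ∧ Occurs 1 y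
    · rw [ihy hy.1 hy.2, mul_mul_eq_of_mem_triple (lift_mem_triple a b x)]
    rcases h0 with h0x | h0y
    · have h1y : Occurs 1 y := h1.resolve_left fun h1x => hx ⟨h0x, h1x⟩
      rw [lift_eq_left_of_not_occurs_one a b fun h1x => hx ⟨h0x, h1x⟩,
        lift_eq_right_of_not_occurs_zero a b fun h0y => hy ⟨h0y, h1y⟩]
    · have h1x : Occurs 1 x := h1.resolve_right fun h1y => hy ⟨h0y, h1y⟩
      rw [lift_eq_right_of_not_occurs_zero a b fun h0x => hx ⟨h0x, h1x⟩,
        lift_eq_left_of_not_occurs_one a b fun h1y => hy ⟨h0y, h1y⟩, mul_comm]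

end IsTwoSemilattice

theorem stmt3 (t : FreeMagma (Fin 2)) (h0 : Occurs 0 t) (h1 : Occurs 1 t) :
    ∀ (M : Type*) [Mul M],
      (∀ x : M, x * x = x) →
      (∀ x y : M, x * y = y * x) →
      (∀ x y : M, x * (x * y) = x * y) →
      ∀ a b : M, FreeMagma.lift ![a, b] t = a * b := by
  intro M _ hid hcomm habs a b
  have : IsTwoSemilattice M := ⟨hid, hcomm, habs⟩
  exact IsTwoSemilattice.lift_eq_mul_of_occurs a b h0 h1
end

section
/- Let M be a type with a binary operation ·, and let θ and α be congruences on (M,·). Assume θ is projection-on-classes (a·b = a whenever θ a b) and commutative modulo θ (θ (a·b) (b·a) for all a, b). Then the relational product θ∘α∘θ is contained in α∘θ∘α: for all a, d ∈ M, if there exist b, c with θ a b, α b c, and θ c d, then there exist b', c' with α a b', θ b' c', and α c' d. -/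
/-! The witnesses are `b' = a * c` and `c' = d * b`. Since `θ`-related elements absorb each other
on the right, `a = a * b` and `d = d * c`; multiplying `α b c` on the left by `a` and by `d` gives
`α a (a * c)` and `α (d * b) d`, while `a * c θ b * d θ d * b` by compatibility and
commutativity modulo `θ`. -/

theorem rel_self_mul_of_absorb {M : Type*} [Mul M] {θ α : M → M → Prop} (hαrefl : ∀ x, α x x)
    (hαcompat : ∀ a b c d : M, α a b → α c d → α (a * c) (b * d))
    (hproj : ∀ a b : M, θ a b → a * b = a) {a b c : M} (hab : θ a b) (hbc : α b c) :
    α a (a * c) := by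
  simpa only [hproj a b hab] using hαcompat a a b c (hαrefl a) hbc

theorem stmt4 {M : Type*} [Mul M] (θ α : M → M → Prop)
    (hθequiv : Equivalence θ)
    (hθcompat : ∀ a b c d : M, θ a b → θ c d → θ (a * c) (b * d))
    (hαequiv : Equivalence α)
    (hαcompat : ∀ a b c d : M, α a b → α c d → α (a * c) (b * d))
    (hproj : ∀ a b : M, θ a b → a * b = a)
    (hcommθ : ∀ a b : M, θ (a * b) (b * a)) :
    ∀ a d : M, (∃ b c : M, θ a b ∧ α b c ∧ θ c d) →
      ∃ b' c' : M, α a b' ∧ θ b' c' ∧ α c' d := by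
  rintro a d ⟨b, c, hab, hbc, hcd⟩
  refine ⟨a * c, d * b, ?_, ?_, ?_⟩
  · exact rel_self_mul_of_absorb hαequiv.refl hαcompat hproj hab hbc
  · exact hθequiv.trans (hθcompat a b c d hab hcd) (hcommθ b d)
  · exact hαequiv.symm <|
      rel_self_mul_of_absorb hαequiv.refl hαcompat hproj (hθequiv.symm hcd) (hαequiv.symm hbc)
end

section
/- Let M be a type with a binary operation ·, and let θ and α be congruences on (M,·). Assume θ is projection-on-classes (a·b = a whenever θ a b) and commutative modulo θ (θ (a·b) (b·a) for all a, b). Then the join α ⊔ θ in the lattice of congruences equals the relational product α∘θ∘α: for all a, d ∈ M, (α ⊔ θ) a d holds if and only if there exist b, c with α a b, θ b c, and α c d. -/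
/-!
As `α` and `θ` are reflexive, `α ∘ θ ∘ α` contains both and lies in the join, so it suffices that it
absorbs one more `θ`-step on the right. Given `a α b θ c α d θ e`, the projection law turns
`α`-compatibility into `b α b·d` (as `b·c = b`) and `e α e·c` (as `e·d = e`), while
`θ (b·d) (c·e)` and commutativity modulo `θ` give `θ (b·d) (e·c)`; hence `a α b·d θ e·c α e`.
-/

section

variable {M : Type*} [Mul M] {θ α : M → M → Prop}

theorem rel_self_mul_of_mul_eq_self
    (hαleft : ∀ x c d : M, α c d → α (x * c) (x * d))
    (hproj : ∀ a b : M, θ a b → a * b = a) {b c d : M} (hbc : θ b c) (hcd : α c d) :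
    α b (b * d) := by
  simpa only [hproj b c hbc] using hαleft b c d hcd

theorem exists_comp_comp_of_comp_comp_of_rel (hθequiv : Equivalence θ)
    (hθcompat : ∀ a b c d : M, θ a b → θ c d → θ (a * c) (b * d))
    (hαequiv : Equivalence α)
    (hαleft : ∀ x c d : M, α c d → α (x * c) (x * d))
    (hproj : ∀ a b : M, θ a b → a * b = a)
    (hcommθ : ∀ a b : M, θ (a * b) (b * a))
    {a b c d e : M} (hab : α a b) (hbc : θ b c) (hcd : α c d) (hde : θ d e) :
    ∃ b' c' : M, α a b' ∧ θ b' c' ∧ α c' e :=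
  ⟨b * d, e * c,
    hαequiv.trans hab (rel_self_mul_of_mul_eq_self hαleft hproj hbc hcd),
    hθequiv.trans (hθcompat b c d e hbc hde) (hcommθ c e),
    hαequiv.symm
      (rel_self_mul_of_mul_eq_self hαleft hproj (hθequiv.symm hde) (hαequiv.symm hcd))⟩

end

theorem stmt5 {M : Type*} [Mul M] (θ α : M → M → Prop)
    (hθequiv : Equivalence θ)
    (hθcompat : ∀ a b c d : M, θ a b → θ c d → θ (a * c) (b * d))
    (hαequiv : Equivalence α)
    (hαcompat : ∀ a b c d : M, α a b → α c d → α (a * c) (b * d))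
    (hproj : ∀ a b : M, θ a b → a * b = a)
    (hcommθ : ∀ a b : M, θ (a * b) (b * a)) :
    -- the join `α ⊔ θ`, i.e. the transitive closure of the union, equals `α ∘ θ ∘ α`
    ∀ a d : M, Relation.TransGen (fun x y => α x y ∨ θ x y) a d ↔
      ∃ b c : M, α a b ∧ θ b c ∧ α c d := by
  have hαleft : ∀ x c d : M, α c d → α (x * c) (x * d) :=
    fun x c d => hαcompat x x c d (hαequiv.refl x)
  intro a d
  constructor
  · intro h
    induction h with
    | single h =>
      rcases h with hα | hθ
      · exact ⟨_, _, hα, hθequiv.refl _, hαequiv.refl _⟩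
      · exact ⟨_, _, hαequiv.refl _, hθ, hαequiv.refl _⟩
    | tail _ hstep ih =>
      obtain ⟨b, c, hab, hbc, hcd⟩ := ih
      rcases hstep with hα | hθ
      · exact ⟨b, c, hab, hbc, hαequiv.trans hcd hα⟩
      · exact exists_comp_comp_of_comp_comp_of_rel hθequiv hθcompat hαequiv hαleft hproj hcommθ
          hab hbc hcd hθ
  · rintro ⟨b, c, hab, hbc, hcd⟩
    exact .tail (.tail (.single (.inl hab)) (.inr hbc)) (.inl hcd)
end

section
/- Let M be a type with a binary operation · and let α be a congruence on (M,·) that is projection-on-classes (a·b = a whenever α a b) and commutative modulo α (α (a·b) (b·a) for all a, b). Then α is uniquely determined: for all a, b ∈ M, α a b holds if and only if a·b = a and b·a = b. -/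
theorem stmt6_general {M : Type*} [Mul M] (α : M → M → Prop)
    (hαequiv : Equivalence α)
    (hproj : ∀ a b : M, α a b → a * b = a)
    (hcommα : ∀ a b : M, α (a * b) (b * a)) :
    ∀ a b : M, α a b ↔ a * b = a ∧ b * a = b := by
  intro a b
  refine ⟨fun h => ⟨hproj a b h, hproj b a (hαequiv.symm h)⟩, fun ⟨hab, hba⟩ => ?_⟩
  simpa only [hab, hba] using hcommα a b

theorem stmt6 {M : Type*} [Mul M] (α : M → M → Prop)
    (hαequiv : Equivalence α)
    (hαcompat : ∀ a b c d : M, α a b → α c d → α (a * c) (b * d))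
    (hproj : ∀ a b : M, α a b → a * b = a)
    (hcommα : ∀ a b : M, α (a * b) (b * a)) :
    ∀ a b : M, α a b ↔ a * b = a ∧ b * a = b :=
  stmt6_general α hαequiv hproj hcommα
end

section
/- Let M be a finite 2-semilattice whose digraph is strongly connected. Then M has no proper absorbing subuniverse: if B ⊆ M is nonempty, closed under ·, and absorbing (witnessed by some term of the free magma on n ≥ 2 generators), then B = M. -/
/-!
Substitute an arbitrary `a` for one variable of the absorbing term and some `b ∈ B` for all the
others. Since the subalgebra generated by `a` and `b` in a 2-semilattice is `{a, b, a * b}`, the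
value is `a`, `b` or `a * b`, and which one depends only on the term and the chosen variable.
It is never `b` when the chosen variable occurs in the term. If it is `a`, every element lies
in `B`; if it is `a * b`, then `B` absorbs multiplication, so it is closed under the edges of
the digraph and strong connectivity spreads it over all of `M`.
-/

/-- The free 2-semilattice on two generators `x` and `y`; `xy` stands for `x * y`. -/
inductive TwoGen
  | x | y | xy
  deriving DecidableEq

namespace TwoGen

instance instMul : Mul TwoGen := ⟨fun
  | x, x => x
  | y, y => y
  | _, _ => xy⟩

theorem mul_eq_y_iff (a b : TwoGen) : a * b = y ↔ a = y ∧ b = y := by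
  cases a <;> cases b <;> decide

theorem exists_lift_update_ne_y {α : Type*} [DecidableEq α] (t : FreeMagma α) :
    ∃ i, FreeMagma.lift (Function.update (fun _ => y) i x) t ≠ y := by
  induction t with
  | ih1 i => exact ⟨i, by simp⟩
  | ih2 t₁ t₂ ih₁ _ =>
    obtain ⟨i, hi⟩ := ih₁
    exact ⟨i, by rw [map_mul, Ne, mul_eq_y_iff]; exact fun h => hi h.1⟩

def evalHom {M : Type*} [Mul M] (hidem : ∀ a : M, a * a = a)
    (hcomm : ∀ a b : M, a * b = b * a) (habs : ∀ a b : M, a * (a * b) = a * b)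
    (a b : M) : TwoGen →ₙ* M where
  toFun
    | x => a
    | y => b
    | xy => a * b
  map_mul' s t := by
    cases s <;> cases t <;> dsimp only [instMul] <;> grind

end TwoGen

theorem FreeMagma.lift_comp_apply {α β γ : Type*} [Mul β] [Mul γ] (f : β →ₙ* γ) (v : α → β)
    (t : FreeMagma α) : FreeMagma.lift (f ∘ v) t = f (FreeMagma.lift v t) :=
  congrArg (· t) (FreeMagma.lift_comp_of' (f.comp (FreeMagma.lift v)))

open Function TwoGen in
theorem eq_univ_or_mul_mem_of_absorbing {M : Type*} [Mul M] (hidem : ∀ a : M, a * a = a)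
    (hcomm : ∀ a b : M, a * b = b * a) (habs : ∀ a b : M, a * (a * b) = a * b)
    {α : Type*} (t : FreeMagma α) {B : Set M} (hBne : B.Nonempty)
    (ht : ∀ v : α → M, (∃ i, ∀ j, j ≠ i → v j ∈ B) → FreeMagma.lift v t ∈ B) :
    B = Set.univ ∨ ∀ a, ∀ b ∈ B, a * b ∈ B := by
  classical
  obtain ⟨i, hi⟩ := exists_lift_update_ne_y t
  have hval : ∀ a, ∀ b ∈ B,
      evalHom hidem hcomm habs a b (FreeMagma.lift (update (fun _ => y) i x) t) ∈ B := by
    intro a b hb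
    rw [← FreeMagma.lift_comp_apply, comp_update]
    exact ht _ ⟨i, fun j hj => by rw [update_of_ne hj]; exact hb⟩
  generalize FreeMagma.lift (update (fun _ => y) i x) t = s at hi hval
  cases s
  · obtain ⟨b, hb⟩ := hBne
    exact .inl (Set.eq_univ_of_forall fun a => hval a b hb)
  · exact absurd rfl hi
  · exact .inr hval

theorem eq_univ_of_mul_mem {M : Type*} [Mul M] (hcomm : ∀ a b : M, a * b = b * a)
    (hsc : ∀ a b : M, Relation.ReflTransGen (fun x y => x * y = y) a b)
    {B : Set M} (hBne : B.Nonempty) (hmul : ∀ a, ∀ b ∈ B, a * b ∈ B) : B = Set.univ := by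
  obtain ⟨b, hb⟩ := hBne
  refine Set.eq_univ_of_forall fun a => ?_
  induction hsc b a with
  | refl => exact hb
  | @tail c d _ hcd hc =>
    rw [← hcd, hcomm]
    exact hmul d c hc

theorem stmt9_general {M : Type*} [Mul M]
    (hidem : ∀ x : M, x * x = x)
    (hcomm : ∀ x y : M, x * y = y * x)
    (habs : ∀ x y : M, x * (x * y) = x * y)
    (hsc : ∀ a b : M, Relation.ReflTransGen (fun x y => x * y = y) a b)
    (B : Set M) (hBne : B.Nonempty)
    (habsorb : ∃ n : ℕ, 2 ≤ n ∧ ∃ t : FreeMagma (Fin n),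
      ∀ v : Fin n → M, (∃ i : Fin n, ∀ j : Fin n, j ≠ i → v j ∈ B) →
        FreeMagma.lift v t ∈ B) :
    B = Set.univ := by
  obtain ⟨n, -, t, ht⟩ := habsorb
  exact (eq_univ_or_mul_mem_of_absorbing hidem hcomm habs t hBne ht).elim id
    (eq_univ_of_mul_mem hcomm hsc hBne)

theorem stmt9 {M : Type*} [Mul M] [Finite M]
    (hidem : ∀ x : M, x * x = x)
    (hcomm : ∀ x y : M, x * y = y * x)
    (habs : ∀ x y : M, x * (x * y) = x * y)
    (hsc : ∀ a b : M, Relation.ReflTransGen (fun x y => x * y = y) a b)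
    (B : Set M) (hBne : B.Nonempty)
    (hBclosed : ∀ a ∈ B, ∀ b ∈ B, a * b ∈ B)
    (habsorb : ∃ n : ℕ, 2 ≤ n ∧ ∃ t : FreeMagma (Fin n),
      ∀ v : Fin n → M, (∃ i : Fin n, ∀ j : Fin n, j ≠ i → v j ∈ B) →
        FreeMagma.lift v t ∈ B) :
    B = Set.univ :=
  stmt9_general hidem hcomm habs hsc B hBne habsorb
end

section
/- Let A and B be finite 2-semilattices whose digraphs are strongly connected, with B simple. If R ⊆ A × B is a subdirect subuniverse, then either R = A × B, or there is a surjective map φ : A → B with φ(a·a') = φ(a)·φ(a') for all a, a' ∈ A such that R = {(a, φ(a)) : a ∈ A}. -/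
/-!
Call `b, b' ∈ B` linked if they have a common `R`-preimage. Linkedness `λ` is reflexive, symmetric
and compatible, so the union of its iterated squares `λ^(2^k)` is a congruence of `B`. If this
congruence is trivial, `R` is the graph of a surjective homomorphism. If it is full then, `B` being
finite, some `λ^(2^k)` is full, and one descends to `λ` because `V ∘ V = B × B` forces `V = B × B`
for a reflexive symmetric subuniverse `V ≤ B × B`. Both this and `R = A × B` once `λ` is full are
instances of: a subuniverse of `A × B` with surjective first projection in which every pair of
`B` is linked is all of `A × B`.

That fact rests on one observation: for a subuniverse `Q ≤ X × Y` with `Y` commutative, a full row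
`{x₀} × Y ⊆ Q` passes along an edge `x₀ → x` to any nonempty row `Q[x]`, since `y ∈ Q[x]` and
`y → c` give `(x₀, c) * (x, y) = (x, c)`. So if `X` and `Y` are strongly connected, one full row
and nonempty rows make `Q` full. Taking `X = Bⁿ` and the pairs `(s, u)` with a common `R`-preimage
(the row of a constant tuple is full), induction on `n` shows that every tuple of `B` has a common
preimage; a common preimage of all of `B` is a full row of `R`, and `X = A` finishes.
-/

/-- A magma is simple if its only congruences are the diagonal and the full relation. -/
def MagmaSimple (B : Type*) [Mul B] : Prop :=
  ∀ σ : B → B → Prop, Equivalence σ →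
    (∀ a b c d : B, σ a b → σ c d → σ (a * c) (b * d)) →
    (∀ a b : B, σ a b ↔ a = b) ∨ (∀ a b : B, σ a b)

def MagmaStronglyConnected (M : Type*) [Mul M] : Prop :=
  ∀ a b : M, Relation.ReflTransGen (fun x y => x * y = y) a b

theorem MagmaStronglyConnected.pi {ι B : Type*} [Finite ι] [Mul B]
    (hidem : ∀ x : B, x * x = x) (hB : MagmaStronglyConnected B) :
    MagmaStronglyConnected (ι → B) := by
  classical
  have := Fintype.ofFinite ι
  intro f g
  suffices ∀ S : Finset ι, Relation.ReflTransGen (fun x y => x * y = y) f (S.piecewise g f) by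
    simpa using this Finset.univ
  intro S
  induction S using Finset.induction_on with
  | empty => simp [Relation.ReflTransGen.refl]
  | insert i S _ ih =>
    set h := S.piecewise g f
    have hh : h * h = h := funext fun j => hidem (h j)
    have hstep : Relation.ReflTransGen (fun x y => x * y = y)
        (Function.update h i (h i)) (Function.update h i (g i)) :=
      (hB (h i) (g i)).lift (Function.update h i) fun x y hxy => by
        change Function.update h i x * Function.update h i y = Function.update h i y
        rw [← Function.update_mul, hxy, hh]
    rw [Function.update_eq_self] at hstep
    rw [Finset.piecewise_insert]
    exact ih.trans hstep

section Rows

variable {X Y : Type*} [Mul X] [Mul Y] {Q : Set (X × Y)}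

theorem forall_prodMk_mem_of_mul_eq (hcomm : ∀ y z : Y, y * z = z * y)
    (hY : MagmaStronglyConnected Y) (hQ : ∀ p ∈ Q, ∀ q ∈ Q, p * q ∈ Q) {x₀ x : X}
    (hx : x₀ * x = x) (h₀ : ∀ y, (x₀, y) ∈ Q) (hne : ∃ y, (x, y) ∈ Q) (y : Y) : (x, y) ∈ Q := by
  obtain ⟨y₀, hy₀⟩ := hne
  induction hY y₀ y with
  | refl => exact hy₀
  | @tail b c _ hbc ih =>
    have := hQ _ (h₀ c) _ ih
    rwa [Prod.mk_mul_mk, hx, hcomm c b, hbc] at this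

theorem eq_univ_of_forall_prodMk_mem (hcomm : ∀ y z : Y, y * z = z * y)
    (hX : MagmaStronglyConnected X) (hY : MagmaStronglyConnected Y)
    (hQ : ∀ p ∈ Q, ∀ q ∈ Q, p * q ∈ Q) (hne : ∀ x, ∃ y, (x, y) ∈ Q) {x₀ : X}
    (h₀ : ∀ y, (x₀, y) ∈ Q) : Q = Set.univ := by
  refine Set.eq_univ_of_forall fun ⟨x, y⟩ => ?_
  induction hX x₀ x generalizing y with
  | refl => exact h₀ y
  | tail _ hbc ih => exact forall_prodMk_mem_of_mul_eq hcomm hY hQ hbc ih (hne _) y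

end Rows

section Linked

variable {A B : Type*} {R : Set (A × B)}

def Linked (R : Set (A × B)) (x y : B) : Prop :=
  ∃ a, (a, x) ∈ R ∧ (a, y) ∈ R

theorem linked_refl (hR : ∀ b : B, ∃ a : A, (a, b) ∈ R) (b : B) : Linked R b b :=
  let ⟨a, ha⟩ := hR b
  ⟨a, ha, ha⟩

theorem Linked.symm {x y : B} : Linked R x y → Linked R y x
  | ⟨a, hx, hy⟩ => ⟨a, hy, hx⟩

variable [Mul A] [Mul B]

theorem Linked.mul (hR : ∀ p ∈ R, ∀ q ∈ R, p * q ∈ R) {a b c d : B} :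
    Linked R a b → Linked R c d → Linked R (a * c) (b * d)
  | ⟨w, ha, hb⟩, ⟨w', hc, hd⟩ => ⟨w * w', hR _ ha _ hc, hR _ hb _ hd⟩

theorem exists_common_preimage_of_linked (hidem : ∀ x : B, x * x = x)
    (hcomm : ∀ x y : B, x * y = y * x) (hB : MagmaStronglyConnected B)
    (hR : ∀ p ∈ R, ∀ q ∈ R, p * q ∈ R) (hlink : ∀ x y, Linked R x y) (n : ℕ)
    (s : Fin n → B) (u : B) : ∃ a, (a, u) ∈ R ∧ ∀ i, (a, s i) ∈ R := by
  induction n generalizing u with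
  | zero =>
    obtain ⟨a, ha, -⟩ := hlink u u
    exact ⟨a, ha, fun i => i.elim0⟩
  | succ n ih =>
    let Q : Set ((Fin (n + 1) → B) × B) := {p | ∃ a, (a, p.2) ∈ R ∧ ∀ i, (a, p.1 i) ∈ R}
    have hQ : ∀ p ∈ Q, ∀ q ∈ Q, p * q ∈ Q := by
      rintro p ⟨a, hu, hs⟩ q ⟨a', hu', hs'⟩
      exact ⟨a * a', hR _ hu _ hu', fun i => hR _ (hs i) _ (hs' i)⟩
    have hne : ∀ t, ∃ v, (t, v) ∈ Q := fun t => by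
      obtain ⟨a, h0, ht⟩ := ih (Fin.tail t) (t 0)
      exact ⟨t 0, a, h0, Fin.cases h0 ht⟩
    have hconst : ∀ v, ((fun _ => u), v) ∈ Q := fun v =>
      let ⟨a, hv, hu⟩ := hlink v u
      ⟨a, hv, fun _ => hu⟩
    have hQ_univ := eq_univ_of_forall_prodMk_mem hcomm (MagmaStronglyConnected.pi hidem hB) hB hQ
      hne hconst
    exact Set.eq_univ_iff_forall.1 hQ_univ (s, u)

theorem eq_univ_of_linked [Finite B] (hA : MagmaStronglyConnected A)
    (hidem : ∀ x : B, x * x = x) (hcomm : ∀ x y : B, x * y = y * x)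
    (hB : MagmaStronglyConnected B) (hR : ∀ p ∈ R, ∀ q ∈ R, p * q ∈ R)
    (hR₁ : ∀ a : A, ∃ b : B, (a, b) ∈ R) (hlink : ∀ x y, Linked R x y) : R = Set.univ := by
  refine Set.eq_univ_of_forall fun ⟨a, b⟩ => ?_
  obtain ⟨n, ⟨e⟩⟩ := Finite.exists_equiv_fin B
  obtain ⟨a₀, -, h₀⟩ := exists_common_preimage_of_linked hidem hcomm hB hR hlink n e.symm b
  have hR_univ := eq_univ_of_forall_prodMk_mem hcomm hA hB hR hR₁ (x₀ := a₀) fun y => by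
    simpa using h₀ (e y)
  exact Set.eq_univ_iff_forall.1 hR_univ (a, b)

theorem exists_surjective_hom_eq_graph (hR : ∀ p ∈ R, ∀ q ∈ R, p * q ∈ R)
    (hR₁ : ∀ a : A, ∃ b : B, (a, b) ∈ R) (hR₂ : ∀ b : B, ∃ a : A, (a, b) ∈ R)
    (hfun : ∀ a b b', (a, b) ∈ R → (a, b') ∈ R → b = b') :
    ∃ φ : A → B, Function.Surjective φ ∧ (∀ a a' : A, φ (a * a') = φ a * φ a') ∧
      R = {p : A × B | p.2 = φ p.1} := by
  choose φ hφ using hR₁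
  have hgraph : ∀ a b, (a, b) ∈ R ↔ b = φ a :=
    fun a b => ⟨fun h => hfun a b _ h (hφ a), fun h => h ▸ hφ a⟩
  refine ⟨φ, fun b => ?_, fun a a' => ?_, Set.ext fun ⟨a, b⟩ => hgraph a b⟩
  · obtain ⟨a, ha⟩ := hR₂ b
    exact ⟨a, ((hgraph a b).1 ha).symm⟩
  · exact ((hgraph _ _).1 (hR _ (hφ a) _ (hφ a'))).symm

end Linked

namespace Relation

variable {α : Type*} {r : α → α → Prop}

def compPowTwo (r : α → α → Prop) : ℕ → α → α → Prop
  | 0 => r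
  | k + 1 => Comp (compPowTwo r k) (compPowTwo r k)

theorem compPowTwo_refl (hr : ∀ x, r x x) : ∀ k x, compPowTwo r k x x
  | 0 => hr
  | k + 1 => fun x => ⟨x, compPowTwo_refl hr k x, compPowTwo_refl hr k x⟩

theorem compPowTwo_symm (hr : ∀ x y, r x y → r y x) :
    ∀ k x y, compPowTwo r k x y → compPowTwo r k y x
  | 0 => hr
  | k + 1 => fun _ _ ⟨m, h₁, h₂⟩ => ⟨m, compPowTwo_symm hr k _ _ h₂, compPowTwo_symm hr k _ _ h₁⟩

theorem compPowTwo_mul [Mul α] (hr : ∀ a b c d, r a b → r c d → r (a * c) (b * d)) :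
    ∀ k a b c d, compPowTwo r k a b → compPowTwo r k c d → compPowTwo r k (a * c) (b * d)
  | 0 => hr
  | k + 1 => fun _ _ _ _ ⟨m, h₁, h₂⟩ ⟨m', h₁', h₂'⟩ =>
    ⟨m * m', compPowTwo_mul hr k _ _ _ _ h₁ h₁', compPowTwo_mul hr k _ _ _ _ h₂ h₂'⟩

theorem monotone_compPowTwo (hr : ∀ x, r x x) : Monotone (compPowTwo r) :=
  monotone_nat_of_le_succ fun k _ y h => ⟨y, h, compPowTwo_refl hr k y⟩

theorem equivalence_exists_compPowTwo (hrefl : ∀ x, r x x) (hsymm : ∀ x y, r x y → r y x) :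
    Equivalence fun x y => ∃ k, compPowTwo r k x y where
  refl x := ⟨0, hrefl x⟩
  symm := fun ⟨k, h⟩ => ⟨k, compPowTwo_symm hsymm k _ _ h⟩
  trans := fun ⟨k, h⟩ ⟨m, h'⟩ =>
    ⟨max k m + 1, _, monotone_compPowTwo hrefl (le_max_left k m) _ _ h,
      monotone_compPowTwo hrefl (le_max_right k m) _ _ h'⟩

theorem exists_compPowTwo_mul [Mul α] (hrefl : ∀ x, r x x)
    (hmul : ∀ a b c d, r a b → r c d → r (a * c) (b * d)) (a b c d : α) :
    (∃ k, compPowTwo r k a b) → (∃ k, compPowTwo r k c d) →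
      ∃ k, compPowTwo r k (a * c) (b * d)
  | ⟨k, h⟩, ⟨m, h'⟩ =>
    ⟨max k m, compPowTwo_mul hmul _ _ _ _ _ (monotone_compPowTwo hrefl (le_max_left k m) _ _ h)
      (monotone_compPowTwo hrefl (le_max_right k m) _ _ h')⟩

theorem exists_forall_compPowTwo [Finite α] (hr : ∀ x, r x x)
    (h : ∀ x y, ∃ k, compPowTwo r k x y) : ∃ K, ∀ x y, compPowTwo r K x y := by
  choose k hk using h
  obtain ⟨K, hK⟩ := Finite.exists_le fun p : α × α => k p.1 p.2
  exact ⟨K, fun x y => monotone_compPowTwo hr (hK (x, y)) _ _ (hk x y)⟩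

end Relation

section Descent

open Relation

variable {B : Type*} [Mul B] [Finite B] (hidem : ∀ x : B, x * x = x)
  (hcomm : ∀ x y : B, x * y = y * x) (hB : MagmaStronglyConnected B) {r : B → B → Prop}
  (hrefl : ∀ x, r x x) (hsymm : ∀ x y, r x y → r y x)
  (hmul : ∀ a b c d, r a b → r c d → r (a * c) (b * d))
include hidem hcomm hB hrefl hsymm hmul

theorem forall_of_forall_comp_self (h : ∀ x z, Comp r r x z) (x y : B) : r x y := by
  have hlink : ∀ x z, Linked {p : B × B | r p.1 p.2} x z := fun x z =>
    let ⟨y, hxy, hyz⟩ := h x z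
    ⟨y, hsymm _ _ hxy, hyz⟩
  have hr_univ := eq_univ_of_linked (R := {p : B × B | r p.1 p.2}) hB hidem hcomm hB
    (fun _ hp _ hq => hmul _ _ _ _ hp hq) (fun x => ⟨x, hrefl x⟩) hlink
  exact Set.eq_univ_iff_forall.1 hr_univ (x, y)

theorem forall_of_forall_exists_compPowTwo (h : ∀ x y, ∃ k, compPowTwo r k x y) (x y : B) :
    r x y := by
  obtain ⟨K, hK⟩ := exists_forall_compPowTwo hrefl h
  induction K with
  | zero => exact hK x y
  | succ k ih =>
    exact ih (forall_of_forall_comp_self hidem hcomm hB (compPowTwo_refl hrefl k)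
      (compPowTwo_symm hsymm k) (compPowTwo_mul hmul k) hK)

end Descent

theorem stmt10_general {A B : Type*} [Mul A] [Mul B] [Finite B]
    (hidemB : ∀ x : B, x * x = x) (hcommB : ∀ x y : B, x * y = y * x)
    (hscA : ∀ a b : A, Relation.ReflTransGen (fun x y => x * y = y) a b)
    (hscB : ∀ a b : B, Relation.ReflTransGen (fun x y => x * y = y) a b)
    (hsimpleB : MagmaSimple B)
    (R : Set (A × B))
    (hRclosed : ∀ p ∈ R, ∀ q ∈ R, p * q ∈ R)
    (hRsd1 : ∀ a : A, ∃ b : B, (a, b) ∈ R)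
    (hRsd2 : ∀ b : B, ∃ a : A, (a, b) ∈ R) :
    R = Set.univ ∨
      ∃ φ : A → B, Function.Surjective φ ∧
        (∀ a a' : A, φ (a * a') = φ a * φ a') ∧
        R = {p : A × B | p.2 = φ p.1} := by
  have hrefl := linked_refl hRsd2
  have hsymm : ∀ x y, Linked R x y → Linked R y x := fun _ _ => Linked.symm
  have hmul : ∀ a b c d, Linked R a b → Linked R c d → Linked R (a * c) (b * d) :=
    fun _ _ _ _ => Linked.mul hRclosed
  rcases hsimpleB _ (Relation.equivalence_exists_compPowTwo hrefl hsymm)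
    (Relation.exists_compPowTwo_mul hrefl hmul) with hdiag | hfull
  · exact Or.inr <| exists_surjective_hom_eq_graph hRclosed hRsd1 hRsd2
      fun a b b' hb hb' => (hdiag b b').1 ⟨0, a, hb, hb'⟩
  · exact Or.inl <| eq_univ_of_linked hscA hidemB hcommB hscB hRclosed hRsd1
      (forall_of_forall_exists_compPowTwo hidemB hcommB hscB hrefl hsymm hmul hfull)

theorem stmt10 {A B : Type*} [Mul A] [Mul B] [Finite A] [Finite B]
    (hidemA : ∀ x : A, x * x = x) (hcommA : ∀ x y : A, x * y = y * x)
    (habsA : ∀ x y : A, x * (x * y) = x * y)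
    (hidemB : ∀ x : B, x * x = x) (hcommB : ∀ x y : B, x * y = y * x)
    (habsB : ∀ x y : B, x * (x * y) = x * y)
    (hscA : ∀ a b : A, Relation.ReflTransGen (fun x y => x * y = y) a b)
    (hscB : ∀ a b : B, Relation.ReflTransGen (fun x y => x * y = y) a b)
    (hsimpleB : MagmaSimple B)
    (R : Set (A × B))
    (hRclosed : ∀ p ∈ R, ∀ q ∈ R, p * q ∈ R)
    (hRsd1 : ∀ a : A, ∃ b : B, (a, b) ∈ R)
    (hRsd2 : ∀ b : B, ∃ a : A, (a, b) ∈ R) :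
    R = Set.univ ∨
      ∃ φ : A → B, Function.Surjective φ ∧
        (∀ a a' : A, φ (a * a') = φ a * φ a') ∧
        R = {p : A × B | p.2 = φ p.1} :=
  stmt10_general hidemB hcommB hscA hscB hsimpleB R hRclosed hRsd1 hRsd2
end

section
/- Let D be a finite type with a binary operation · satisfying the identity x·(y·z) = x·(z·y), and let θ be a congruence on (D,·) that is projection-on-classes (a·b = a whenever θ a b). Let X be a finite set, and for each x ∈ X let P_x ⊆ D be closed under ·, and for each (x,y) ∈ X² let R_{xy} ⊆ P_x × P_y be closed under coordinatewise ·. Suppose s : X → D is a solution (s(x) ∈ P_x for all x and (s(x),s(y)) ∈ R_{xy} for all x,y), and ψ : X → D satisfies: (a) θ (s(x)·ψ(x)) (ψ(x)) for every x (the θ-class of s(x) points to the θ-class of ψ(x)); and (b) for all x, y there exists (a,b) ∈ R_{xy} with θ a (ψ(x)) and θ b (ψ(y)) (ψ induces a solution of the quotient instance). Then t : X → D defined by t(x) = s(x)·ψ(x) is a solution, and θ (t(x)) (ψ(x)) for every x, i.e. t passes through the quotient solution induced by ψ. -/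
/-! When `θ` is projection-on-classes and `x * (y * z) = x * (z * y)`, the product `u * v` depends
only on the `θ`-class of `v`: `u * v = u * (v * w) = u * (w * v) = u * w` for `θ v w`. Hence
`s x * ψ x = s x * a` for any `θ`-representative `a` of `ψ x`; taking `(a, b) ∈ R x y` from the
quotient solution, `(t x, t y) = (s x, s y) * (a, b)` lies in `R x y` by
closure, and `t x ∈ P x` follows from `(t x, t x) ∈ R x x ⊆ P x ×ˢ P x`. -/

theorem mul_eq_mul_of_rel {D : Type*} [Mul D] (hswap : ∀ x y z : D, x * (y * z) = x * (z * y))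
    {θ : D → D → Prop} (hsymm : ∀ {a b}, θ a b → θ b a) (hproj : ∀ a b : D, θ a b → a * b = a)
    (u : D) {v w : D} (h : θ v w) : u * v = u * w :=
  calc u * v = u * (v * w) := by rw [hproj v w h]
    _ = u * (w * v) := hswap u v w
    _ = u * w := by rw [hproj w v (hsymm h)]

theorem stmt15_general {D : Type*} [Mul D]
    (hswap : ∀ x y z : D, x * (y * z) = x * (z * y))
    (θ : D → D → Prop) (hθequiv : Equivalence θ)
    (hproj : ∀ a b : D, θ a b → a * b = a)
    {X : Type*}
    (P : X → Set D) (R : X → X → Set (D × D))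
    (hRsub : ∀ x y, R x y ⊆ (P x) ×ˢ (P y))
    (hRclosed : ∀ x y, ∀ p ∈ R x y, ∀ q ∈ R x y, p * q ∈ R x y)
    (s ψ : X → D)
    (hs2 : ∀ x y, (s x, s y) ∈ R x y)
    (ha : ∀ x, θ (s x * ψ x) (ψ x))
    (hb : ∀ x y, ∃ p ∈ R x y, θ p.1 (ψ x) ∧ θ p.2 (ψ y)) :
    let t : X → D := fun x => s x * ψ x
    (∀ x, t x ∈ P x) ∧ (∀ x y, (t x, t y) ∈ R x y) ∧ ∀ x, θ (t x) (ψ x) := by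
  intro t
  have ht : ∀ x y, ∃ p ∈ R x y, (t x, t y) = (s x, s y) * p := by
    intro x y
    obtain ⟨p, hp, h1, h2⟩ := hb x y
    refine ⟨p, hp, Prod.ext ?_ ?_⟩
    · exact mul_eq_mul_of_rel hswap hθequiv.symm hproj (s x) (hθequiv.symm h1)
    · exact mul_eq_mul_of_rel hswap hθequiv.symm hproj (s y) (hθequiv.symm h2)
  have hR : ∀ x y, (t x, t y) ∈ R x y := fun x y => by
    obtain ⟨p, hp, htp⟩ := ht x y
    exact htp ▸ hRclosed x y _ (hs2 x y) p hp
  exact ⟨fun x => (hRsub x x (hR x x)).1, hR, ha⟩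

theorem stmt15 {D : Type*} [Mul D] [Finite D]
    (hswap : ∀ x y z : D, x * (y * z) = x * (z * y))
    (θ : D → D → Prop) (hθequiv : Equivalence θ)
    (hθcompat : ∀ a b c d : D, θ a b → θ c d → θ (a * c) (b * d))
    (hproj : ∀ a b : D, θ a b → a * b = a)
    {X : Type*} [Finite X]
    (P : X → Set D) (R : X → X → Set (D × D))
    (hPclosed : ∀ x, ∀ a ∈ P x, ∀ b ∈ P x, a * b ∈ P x)
    (hRsub : ∀ x y, R x y ⊆ (P x) ×ˢ (P y))
    (hRclosed : ∀ x y, ∀ p ∈ R x y, ∀ q ∈ R x y, p * q ∈ R x y)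
    (s ψ : X → D)
    (hs1 : ∀ x, s x ∈ P x)
    (hs2 : ∀ x y, (s x, s y) ∈ R x y)
    (ha : ∀ x, θ (s x * ψ x) (ψ x))
    (hb : ∀ x y, ∃ p ∈ R x y, θ p.1 (ψ x) ∧ θ p.2 (ψ y)) :
    let t : X → D := fun x => s x * ψ x
    (∀ x, t x ∈ P x) ∧ (∀ x y, (t x, t y) ∈ R x y) ∧ ∀ x, θ (t x) (ψ x) :=
  stmt15_general hswap θ hθequiv hproj P R hRsub hRclosed s ψ hs2 ha hb
end
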